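/- arXiv:math/0605719 — 3 statements merged into one kernel-verified Lean document; each statement's English description precedes it below -/
import Mathlib

section
/- Let s ∈ 𝒜^ℕ be an infinite word such that the limit h(s) := lim_{n→∞} (1/n)·ln(1/p(s^(n))) exists and is positive. Then X_n(s)/ln n converges almost surely to 1/h(s) as n → ∞. -/
open MeasureTheory Filter Finset

noncomputable section

/- The four-letter alphabet `{A, C, G, T}` is encoded as `Fin 4`
(with `0 = A`, `1 = C`, `2 = G`, `3 = T`). -/

/-- `Tfun U s r ω` is `T_r(s)(ω)`: `T_0(s) = 0` and
`T_r(s) = T_{r-1}(s) + Z_r(s)` where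
`Z_r(s) = min {n ≥ 1 : U_{n+T_{r-1}(s)} U_{n+T_{r-1}(s)-1} ⋯ U_{n+T_{r-1}(s)-r+1} = s_1 ⋯ s_r}`. -/
def Tfun {Ω : Type*} (U : ℕ → Ω → Fin 4) (s : ℕ → Fin 4) : ℕ → Ω → ℕ
  | 0 => fun _ => 0
  | r + 1 => fun ω =>
      Tfun U s r ω +
        sInf {n : ℕ | 1 ≤ n ∧ ∀ j < r + 1, U (n + Tfun U s r ω - j) ω = s (j + 1)}

/-- `Xfun U s n ω` is `X_n(s)(ω) = max {k ≥ 0 : T_k(s) ≤ n}`, the length of the branch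
associated with `s` in the CGR-tree `𝒯_n`. -/
def Xfun {Ω : Type*} (U : ℕ → Ω → Fin 4) (s : ℕ → Fin 4) (n : ℕ) (ω : Ω) : ℕ :=
  sSup {k : ℕ | Tfun U s k ω ≤ n}

/-- `pfin μ U n w` is `p(w) = P(U_1 = w_n, U_2 = w_{n-1}, …, U_n = w_1)` for a finite
word `w = w_1 … w_n` (0-indexed: `w i` is the letter `w_{i+1}`). -/
def pfin {Ω : Type*} [MeasurableSpace Ω] (μ : Measure Ω) (U : ℕ → Ω → Fin 4)
    (n : ℕ) (w : Fin n → Fin 4) : ℝ :=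
  (μ {ω | ∀ i : Fin n, U (i.1 + 1) ω = w (Fin.rev i)}).toReal

/-- `pinf μ U s n` is `p(s^(n))`, i.e. `p` of the length-`n` prefix `s_1 … s_n` of the
infinite word `s` (with letters `s 1, s 2, …`). -/
def pinf {Ω : Type*} [MeasurableSpace Ω] (μ : Measure Ω) (U : ℕ → Ω → Fin 4)
    (s : ℕ → Fin 4) (n : ℕ) : ℝ :=
  (μ {ω | ∀ i : Fin n, U (i.1 + 1) ω = s (n - i.1)}).toReal

/-- `Dfun U n ω` is the insertion depth `D_n = 1 + X_{n-1}(s)` where `s` is an infinite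
word whose first `n` letters are `U_n U_{n-1} ⋯ U_1`. -/
def Dfun {Ω : Type*} (U : ℕ → Ω → Fin 4) (n : ℕ) (ω : Ω) : ℕ :=
  1 + Xfun U (fun i => U (n + 1 - i) ω) (n - 1) ω

/-!
Each occurrence of the reversed prefix `s_k ⋯ s_1` in `U` has probability
`p(s^(k)) = exp (-(h + o(1)) k)`, by stationarity wherever it starts.

Upper bound: `X_n ≥ k` forces an occurrence of the prefix of length `k` before time `n`. For
`n < 2 ^ (i + 1)` and `k ≈ a i log 2` with `a h > 1`, a union bound gives probability
`≤ 2 ^ (i + 1) exp (-h k)`, which is summable in `i`, so by Borel–Cantelli `X_n ≤ a log n`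
eventually.

Lower bound: `X_n ≥ k` as soon as each of `k` consecutive windows of `G = n / k²` aligned blocks
of length `k` contains an occurrence. Since all transition probabilities are at least
`c = min Q > 0`, every block is filled, whatever happened before it, with probability at least
`δ = c p(s^(k))`, so a window stays empty with probability `≤ (1 - δ) ^ G`. For
`k ≈ a log n` with `a h < 1` this is `exp (-n ^ (1 - a h + o(1)))`, again summable in `n`.
Letting `a` run through the rationals on either side of `1 / h` gives the limit.
-/

open Topology

namespace CGR

section Cylinders

variable {Ω α : Type*}

def cylinder (U : ℕ → Ω → α) (a m : ℕ) (w : ℕ → α) : Set Ω :=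
  {ω | ∀ i < m, U (a + 1 + i) ω = w i}

@[simp]
lemma cylinder_zero (U : ℕ → Ω → α) (a : ℕ) (w : ℕ → α) : cylinder U a 0 w = Set.univ := by
  ext ω; simp [cylinder]

lemma measurableSet_cylinder [MeasurableSpace Ω] [MeasurableSpace α] [MeasurableSingletonClass α]
    {U : ℕ → Ω → α} (hU : ∀ n, Measurable (U n)) (a m : ℕ) (w : ℕ → α) :
    MeasurableSet (cylinder U a m w) := by
  have h : cylinder U a m w = ⋂ i, ⋂ _ : i < m, U (a + 1 + i) ⁻¹' {w i} := by
    ext ω; simp [cylinder]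
  rw [h]
  exact .iInter fun i => .iInter fun _ => hU _ (measurableSet_singleton _)

def patch (w : ℕ → α) (t : ℕ) {m : ℕ} (b : Fin m → α) : ℕ → α :=
  fun i => if h : t ≤ i ∧ i < t + m then b ⟨i - t, by omega⟩ else w i

lemma patch_of_lt (w : ℕ → α) {t m : ℕ} (b : Fin m → α) {i : ℕ} (h : i < t) :
    patch w t b i = w i :=
  dif_neg (by omega)

lemma patch_add (w : ℕ → α) {t m : ℕ} (b : Fin m → α) {j : ℕ} (h : j < m) :
    patch w t b (t + j) = b ⟨j, h⟩ := by
  simp only [patch]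
  rw [dif_pos ⟨by omega, by omega⟩]
  exact congrArg b (Fin.ext (by simp))

lemma cylinder_patch_subset (U : ℕ → Ω → α) (w : ℕ → α) (t : ℕ) {m : ℕ} (b : Fin m → α) :
    cylinder U 0 (t + m) (patch w t b) ⊆ cylinder U 0 t w := fun ω hω i hi => by
  simpa only [patch_of_lt _ _ hi] using hω i (by omega)

lemma mem_cylinder_iff_of_mem_cylinder_patch {U : ℕ → Ω → α} {w v : ℕ → α} {t m : ℕ}
    {b : Fin m → α} {ω : Ω} (hω : ω ∈ cylinder U 0 (t + m) (patch w t b)) :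
    ω ∈ cylinder U t m v ↔ b = fun j : Fin m => v j := by
  have hb : ∀ j : Fin m, U (t + 1 + j) ω = b j := fun j => by
    have h := hω (t + j) (by omega)
    rwa [patch_add _ _ j.2, show 0 + 1 + (t + j) = t + 1 + j by omega] at h
  constructor
  · exact fun h => funext fun j => (hb j).symm.trans (h j j.2)
  · rintro rfl i hi
    exact hb ⟨i, hi⟩

lemma measureReal_cylinder_inter_eq_sum [MeasurableSpace Ω] [Fintype α] [MeasurableSpace α]
    [MeasurableSingletonClass α] (μ : Measure Ω) [IsFiniteMeasure μ] {U : ℕ → Ω → α}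
    (hU : ∀ n, Measurable (U n)) {X : Set Ω} (hX : MeasurableSet X) (t m : ℕ) (w : ℕ → α) :
    μ.real (cylinder U 0 t w ∩ X)
      = ∑ b : Fin m → α, μ.real (cylinder U 0 (t + m) (patch w t b) ∩ X) := by
  have hset : cylinder U 0 t w ∩ X
      = ⋃ b ∈ (Finset.univ : Finset (Fin m → α)), cylinder U 0 (t + m) (patch w t b) ∩ X := by
    ext ω
    simp only [Set.mem_iUnion, Set.mem_inter_iff, Finset.mem_univ, exists_true_left]
    constructor
    · rintro ⟨hω, hωX⟩
      refine ⟨fun j => U (t + 1 + j) ω, fun i hi => ?_, hωX⟩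
      rcases lt_or_ge i t with hit | hit
      · rw [patch_of_lt _ _ hit]; exact hω i hit
      · obtain ⟨j, rfl⟩ := Nat.exists_eq_add_of_le hit
        rw [patch_add _ _ (by omega : j < m), show 0 + 1 + (t + j) = t + 1 + j by omega]
    · rintro ⟨b, hb, hbX⟩
      exact ⟨cylinder_patch_subset U w t b hb, hbX⟩
  have hdisj : Set.PairwiseDisjoint ((Finset.univ : Finset (Fin m → α)) : Set (Fin m → α))
      (fun b => cylinder U 0 (t + m) (patch w t b) ∩ X) := by
    intro b _ b' _ hbb'
    refine Set.disjoint_left.2 fun ω hb hb' => hbb' (funext fun j => ?_)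
    have h1 := hb.1 (t + j) (by omega)
    have h2 := hb'.1 (t + j) (by omega)
    rw [patch_add _ _ j.2] at h1 h2
    exact h1.symm.trans h2
  rw [hset, measureReal_biUnion_finset hdisj
    fun b _ => (measurableSet_cylinder hU _ _ _).inter hX]

variable [MeasurableSpace Ω]

def IsStationary (μ : Measure Ω) (U : ℕ → Ω → α) : Prop :=
  ∀ t m w, μ (cylinder U t m w) = μ (cylinder U 0 m w)

/-- Conditionally on any prefix `w`, the next `r` letters spell `v` with probability at least
`c` times the unconditional probability of `v`. -/
def HasMixingLowerBound (μ : Measure Ω) (U : ℕ → Ω → α) (c : ℝ) : Prop :=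
  ∀ (a r : ℕ) (w v : ℕ → α), c * μ.real (cylinder U 0 r v) * μ.real (cylinder U 0 a w)
    ≤ μ.real (cylinder U 0 (a + r) (patch w a fun j : Fin r => v j))

lemma le_one_of_forall_mul_measureReal_le {μ : Measure Ω} [IsProbabilityMeasure μ]
    {U : ℕ → Ω → α} {v : ℕ → α} {r : ℕ} {δ : ℝ}
    (hδ : ∀ a w, δ * μ.real (cylinder U 0 a w)
      ≤ μ.real (cylinder U 0 (a + r) (patch w a fun j : Fin r => v j))) : δ ≤ 1 := by
  simpa using (hδ 0 v).trans measureReal_le_one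

end Cylinders

section Waiting

variable {Ω α : Type*}

def noOccurrence (U : ℕ → Ω → α) (v : ℕ → α) (r a L : ℕ) : Set Ω :=
  {ω | ∀ l < L, ω ∉ cylinder U (a + l * r) r v}

lemma noOccurrence_succ (U : ℕ → Ω → α) (v : ℕ → α) (r a L : ℕ) :
    noOccurrence U v r a (L + 1) = (cylinder U a r v)ᶜ ∩ noOccurrence U v r (a + r) L := by
  ext ω
  simp only [noOccurrence, Set.mem_inter_iff, Set.mem_compl_iff]
  refine ⟨fun h => ⟨by simpa using h 0 (by omega), fun l hl => ?_⟩, fun ⟨h0, h⟩ l hl => ?_⟩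
  · simpa [add_mul, add_assoc, add_comm r] using h (l + 1) (by omega)
  · rcases l with _ | l
    · simpa using h0
    · simpa [add_mul, add_assoc, add_comm r] using h l (by omega)

variable [MeasurableSpace Ω] [MeasurableSpace α] [MeasurableSingletonClass α] {U : ℕ → Ω → α}

lemma measurableSet_noOccurrence (hU : ∀ n, Measurable (U n)) (v : ℕ → α) (r a L : ℕ) :
    MeasurableSet (noOccurrence U v r a L) := by
  have h : noOccurrence U v r a L = ⋂ l, ⋂ _ : l < L, (cylinder U (a + l * r) r v)ᶜ := by
    ext ω; simp [noOccurrence]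
  rw [h]
  exact .iInter fun l => .iInter fun _ => (measurableSet_cylinder hU _ _ _).compl

variable [Fintype α] {μ : Measure Ω} [IsProbabilityMeasure μ]

/-- `hδ` says that, whatever the past, the next block is filled by `v` with probability at
least `δ`. -/
lemma measureReal_cylinder_inter_noOccurrence_le (hU : ∀ n, Measurable (U n)) {v : ℕ → α}
    {r : ℕ} {δ : ℝ} (hδ : ∀ a w, δ * μ.real (cylinder U 0 a w)
      ≤ μ.real (cylinder U 0 (a + r) (patch w a fun j : Fin r => v j))) (L a : ℕ) (w : ℕ → α) :
    μ.real (cylinder U 0 a w ∩ noOccurrence U v r a L)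
      ≤ (1 - δ) ^ L * μ.real (cylinder U 0 a w) := by
  classical
  have hδ1 := le_one_of_forall_mul_measureReal_le hδ
  induction L generalizing a w with
  | zero => simp [noOccurrence]
  | succ L ih =>
    set b₀ : Fin r → α := fun j => v j
    set X := noOccurrence U v r (a + r) L
    set M : (Fin r → α) → ℝ := fun b => μ.real (cylinder U 0 (a + r) (patch w a b))
    have hM : ∑ b, M b = μ.real (cylinder U 0 a w) := by
      simpa using (measureReal_cylinder_inter_eq_sum μ hU .univ a r w).symm
    have hterm : ∀ b, μ.real (cylinder U 0 (a + r) (patch w a b) ∩ ((cylinder U a r v)ᶜ ∩ X))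
        ≤ if b = b₀ then 0 else (1 - δ) ^ L * M b := by
      intro b
      split_ifs with hb
      · have hempty : cylinder U 0 (a + r) (patch w a b) ∩ ((cylinder U a r v)ᶜ ∩ X) = ∅ :=
          Set.eq_empty_of_forall_notMem fun ω ⟨hω, hv, _⟩ =>
            hv ((mem_cylinder_iff_of_mem_cylinder_patch hω).2 hb)
        simp [hempty]
      · exact (measureReal_mono (Set.inter_subset_inter_right _ Set.inter_subset_right)).trans
          (ih (a + r) (patch w a b))
    have hmeas := (measurableSet_cylinder hU a r v).compl.inter
      (measurableSet_noOccurrence hU v r (a + r) L)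
    calc μ.real (cylinder U 0 a w ∩ noOccurrence U v r a (L + 1))
        = ∑ b, μ.real (cylinder U 0 (a + r) (patch w a b) ∩ ((cylinder U a r v)ᶜ ∩ X)) := by
          rw [noOccurrence_succ, measureReal_cylinder_inter_eq_sum μ hU hmeas a r w]
      _ ≤ ∑ b, if b = b₀ then 0 else (1 - δ) ^ L * M b := sum_le_sum fun b _ => hterm b
      _ = (1 - δ) ^ L * (∑ b, M b - M b₀) := by
          rw [← add_sum_erase _ _ (mem_univ b₀), if_pos rfl, zero_add,
            ← add_sum_erase _ M (mem_univ b₀), add_sub_cancel_left, mul_sum]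
          exact sum_congr rfl fun b hb => if_neg (ne_of_mem_erase hb)
      _ ≤ (1 - δ) ^ L * ((1 - δ) * μ.real (cylinder U 0 a w)) := by
          refine mul_le_mul_of_nonneg_left ?_ (pow_nonneg (by linarith) L)
          linarith [hδ a w]
      _ = (1 - δ) ^ (L + 1) * μ.real (cylinder U 0 a w) := by ring

lemma measureReal_noOccurrence_le (hU : ∀ n, Measurable (U n)) {v : ℕ → α} {r : ℕ} {δ : ℝ}
    (hδ : ∀ a w, δ * μ.real (cylinder U 0 a w)
      ≤ μ.real (cylinder U 0 (a + r) (patch w a fun j : Fin r => v j))) (a L : ℕ) :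
    μ.real (noOccurrence U v r a L) ≤ (1 - δ) ^ L := by
  have hsplit := measureReal_cylinder_inter_eq_sum μ hU (measurableSet_noOccurrence hU v r a L)
    0 a v
  have htotal := measureReal_cylinder_inter_eq_sum μ hU .univ 0 a v
  simp only [cylinder_zero, Set.univ_inter, Set.inter_univ, zero_add, probReal_univ]
    at hsplit htotal
  calc μ.real (noOccurrence U v r a L)
      = ∑ b : Fin a → α, μ.real (cylinder U 0 a (patch v 0 b) ∩ noOccurrence U v r a L) := hsplit
    _ ≤ ∑ b : Fin a → α, (1 - δ) ^ L * μ.real (cylinder U 0 a (patch v 0 b)) :=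
        sum_le_sum fun b _ => measureReal_cylinder_inter_noOccurrence_le hU hδ L a _
    _ = (1 - δ) ^ L := by rw [← mul_sum, ← htotal, mul_one]

lemma ae_forall_exists_mem_cylinder (hU : ∀ n, Measurable (U n)) {v : ℕ → α} {r : ℕ}
    {δ : ℝ} (hδ0 : 0 < δ) (hδ : ∀ a w, δ * μ.real (cylinder U 0 a w)
      ≤ μ.real (cylinder U 0 (a + r) (patch w a fun j : Fin r => v j))) :
    ∀ᵐ ω ∂μ, ∀ M, ∃ t, M ≤ t ∧ ω ∈ cylinder U t r v := by
  refine ae_all_iff.2 fun M => ?_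
  have hδ1 := le_one_of_forall_mul_measureReal_le hδ
  have hle : ∀ L, μ {ω | ¬ ∃ t, M ≤ t ∧ ω ∈ cylinder U t r v} ≤ ENNReal.ofReal ((1 - δ) ^ L) := by
    intro L
    have hsub : {ω | ¬ ∃ t, M ≤ t ∧ ω ∈ cylinder U t r v} ⊆ noOccurrence U v r M L :=
      fun ω hω l _ hl => hω ⟨M + l * r, Nat.le_add_right _ _, hl⟩
    refine (measure_mono hsub).trans
      ((ENNReal.le_ofReal_iff_toReal_le (measure_ne_top _ _) (pow_nonneg (by linarith) L)).2
        (measureReal_noOccurrence_le hU hδ M L))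
  have hlim : Tendsto (fun L => ENNReal.ofReal ((1 - δ) ^ L)) atTop (nhds 0) := by
    simpa using ENNReal.tendsto_ofReal
      (tendsto_pow_atTop_nhds_zero_of_lt_one (by linarith) (by linarith : 1 - δ < 1))
  exact ae_iff.2 (nonpos_iff_eq_zero.1 (ge_of_tendsto' hlim hle))

end Waiting

section MarkovChain

variable {Ω α : Type*} [MeasurableSpace Ω]

def HasMarkovLaw (μ : Measure Ω) (U : ℕ → Ω → α) (Q : α → α → ℝ) (p : α → ℝ) : Prop :=
  ∀ (n : ℕ) (w : Fin (n + 1) → α), (μ {ω | ∀ i : Fin (n + 1), U (i.1 + 1) ω = w i}).toReal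
    = p (w 0) * ∏ i : Fin n, Q (w i.castSucc) (w i.succ)

def wordProb (Q : α → α → ℝ) (p : α → ℝ) : ℕ → (ℕ → α) → ℝ
  | 0, _ => 1
  | m + 1, w => p (w 0) * ∏ i ∈ range m, Q (w i) (w (i + 1))

variable {Q : α → α → ℝ} {p : α → ℝ}

lemma wordProb_congr {m : ℕ} {w w' : ℕ → α} (h : ∀ i < m, w i = w' i) :
    wordProb Q p m w = wordProb Q p m w' := by
  rcases m with _ | m
  · rfl
  · simp only [wordProb, h 0 (by omega)]
    congr 1
    refine prod_congr rfl fun i hi => ?_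
    rw [mem_range] at hi
    rw [h i (by omega), h (i + 1) (by omega)]

lemma wordProb_pos (hQpos : ∀ u v, 0 < Q u v) (hppos : ∀ u, 0 < p u) (m : ℕ) (w : ℕ → α) :
    0 < wordProb Q p m w := by
  rcases m with _ | m
  · exact one_pos
  · exact mul_pos (hppos _) (prod_pos fun i _ => hQpos _ _)

lemma wordProb_add_succ (a r : ℕ) (u : ℕ → α) :
    wordProb Q p (a + 1 + (r + 1)) u = wordProb Q p (a + 1) u *
      (Q (u a) (u (a + 1)) * ∏ j ∈ range r, Q (u (a + 1 + j)) (u (a + 1 + j + 1))) := by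
  rw [show a + 1 + (r + 1) = a + (r + 1) + 1 by omega]
  simp only [wordProb]
  rw [prod_range_add, prod_range_succ' _ r, mul_assoc, mul_comm (∏ j ∈ range r, _)]
  simp only [add_zero, add_assoc, add_comm 1]

/-- By induction on `t`, summing over the letter `U (t + 1)` and using `p Q = p`. -/
lemma measureReal_cylinder [Fintype α] [MeasurableSpace α] [MeasurableSingletonClass α]
    {μ : Measure Ω} [IsProbabilityMeasure μ] {U : ℕ → Ω → α} (hU : ∀ n, Measurable (U n))
    (hpinv : ∀ v, ∑ u, p u * Q u v = p v) (hMarkov : HasMarkovLaw μ U Q p)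
    (t m : ℕ) (w : ℕ → α) : μ.real (cylinder U t m w) = wordProb Q p m w := by
  rcases m with _ | m
  · simp [wordProb]
  induction t generalizing m w with
  | zero =>
    have hset : cylinder U 0 (m + 1) w
        = {ω | ∀ i : Fin (m + 1), U (i.1 + 1) ω = (fun j : Fin (m + 1) => w j) i} := by
      ext ω
      simp only [cylinder, zero_add, add_comm 1]
      exact ⟨fun h i => h i i.2, fun h i hi => h ⟨i, hi⟩⟩
    rw [hset, measureReal_def, hMarkov m, wordProb,
      ← Fin.prod_univ_eq_prod_range (fun i => Q (w i) (w (i + 1)))]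
    simp
  | succ t ih =>
    set c : α → ℕ → α := fun a i => if i = 0 then a else w (i - 1) with hc
    have hset : cylinder U (t + 1) (m + 1) w = ⋃ a, cylinder U t (m + 2) (c a) := by
      ext ω
      simp only [cylinder, Set.mem_iUnion]
      constructor
      · intro h
        refine ⟨U (t + 1) ω, fun i hi => ?_⟩
        rcases i with _ | j
        · simp [hc]
        · simpa [hc, show t + 1 + (j + 1) = t + 1 + 1 + j by omega] using h j (by omega)
      · rintro ⟨a, ha⟩ i hi
        simpa [hc, show t + 1 + (i + 1) = t + 1 + 1 + i by omega] using ha (i + 1) (by omega)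
    have hdisj : Pairwise (Function.onFun Disjoint fun a => cylinder U t (m + 2) (c a)) := by
      intro a b hab
      refine Set.disjoint_left.2 fun ω ha hb => hab ?_
      simpa [hc] using (ha 0 (by omega)).symm.trans (hb 0 (by omega))
    rw [hset, measureReal_iUnion_fintype hdisj fun a => measurableSet_cylinder hU _ _ _]
    simp only [ih, wordProb, prod_range_succ', hc]
    simp only [add_tsub_cancel_right, if_true, Nat.add_eq_zero_iff, one_ne_zero, and_false,
      if_false]
    rw [← hpinv (w 0), sum_mul]
    exact sum_congr rfl fun a _ => by ring

lemma isStationary_of_hasMarkovLaw [Fintype α] [MeasurableSpace α] [MeasurableSingletonClass α]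
    {μ : Measure Ω} [IsProbabilityMeasure μ] {U : ℕ → Ω → α} (hU : ∀ n, Measurable (U n))
    (hpinv : ∀ v, ∑ u, p u * Q u v = p v) (hMarkov : HasMarkovLaw μ U Q p) :
    IsStationary μ U := fun t m w =>
  (ENNReal.toReal_eq_toReal_iff' (measure_ne_top _ _) (measure_ne_top _ _)).1
    ((measureReal_cylinder hU hpinv hMarkov t m w).trans
      (measureReal_cylinder hU hpinv hMarkov 0 m w).symm)

variable [Fintype α] [Nonempty α]

def minEntry (Q : α → α → ℝ) : ℝ :=
  univ.inf' univ_nonempty fun x : α × α => Q x.1 x.2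

lemma minEntry_le (Q : α → α → ℝ) (u v : α) : minEntry Q ≤ Q u v :=
  inf'_le _ (mem_univ (u, v))

lemma minEntry_pos (hQpos : ∀ u v, 0 < Q u v) : 0 < minEntry Q :=
  (lt_inf'_iff _).2 fun x _ => hQpos x.1 x.2

lemma minEntry_le_one (hQpos : ∀ u v, 0 < Q u v) (hQrow : ∀ u, ∑ v, Q u v = 1) :
    minEntry Q ≤ 1 := by
  obtain ⟨u⟩ := ‹Nonempty α›
  calc minEntry Q ≤ Q u u := minEntry_le Q u u
    _ ≤ ∑ v, Q u v := single_le_sum (fun v _ => (hQpos u v).le) (mem_univ u)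
    _ = 1 := hQrow u

/-- The transition from `w` into `v` has probability
`Q (w (a - 1)) (v 0) ≥ minEntry Q * p (v 0)`, which replaces the initial factor `p (v 0)` of
`wordProb Q p r v`. -/
lemma minEntry_mul_wordProb_le (hQpos : ∀ u v, 0 < Q u v) (hQrow : ∀ u, ∑ v, Q u v = 1)
    (hppos : ∀ u, 0 < p u) (hpsum : ∑ u, p u = 1) (a r : ℕ) (w v : ℕ → α) :
    minEntry Q * wordProb Q p r v * wordProb Q p a w
      ≤ wordProb Q p (a + r) (patch w a fun j : Fin r => v j) := by
  set u := patch w a fun j : Fin r => v j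
  have hu_lt : ∀ i < a, u i = w i := fun i hi => patch_of_lt _ _ hi
  have hu_add : ∀ j < r, u (a + j) = v j := fun j hj => patch_add _ _ hj
  have hc1 := minEntry_le_one hQpos hQrow
  have hpos := wordProb_pos (Q := Q) (p := p) hQpos hppos
  rcases r with _ | r
  · rw [add_zero, wordProb_congr hu_lt, wordProb, mul_one]
    exact mul_le_of_le_one_left (hpos _ _).le hc1
  rcases a with _ | a
  · rw [zero_add, wordProb_congr (w := u) (w' := v) fun j hj => by rw [← hu_add j hj, zero_add],
      wordProb, mul_one]
    exact mul_le_of_le_one_left (hpos _ _).le hc1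
  have hpv : p (v 0) ≤ 1 :=
    hpsum ▸ single_le_sum (fun u _ => (hppos u).le) (mem_univ (v 0))
  have hprod : ∏ j ∈ range r, Q (u (a + 1 + j)) (u (a + 1 + j + 1))
      = ∏ j ∈ range r, Q (v j) (v (j + 1)) :=
    prod_congr rfl fun j hj => by
      rw [mem_range] at hj
      rw [hu_add j (by omega), add_assoc, hu_add (j + 1) (by omega)]
  rw [wordProb_add_succ, wordProb_congr hu_lt, hprod, hu_lt a (by omega), hu_add 0 (by omega)]
  have hQ : minEntry Q * p (v 0) ≤ Q (w a) (v 0) :=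
    (mul_le_of_le_one_right (minEntry_pos hQpos).le hpv).trans (minEntry_le Q _ _)
  have hP : 0 ≤ ∏ j ∈ range r, Q (v j) (v (j + 1)) := prod_nonneg fun j _ => (hQpos _ _).le
  calc minEntry Q * wordProb Q p (r + 1) v * wordProb Q p (a + 1) w
      = wordProb Q p (a + 1) w * (minEntry Q * p (v 0) * ∏ j ∈ range r, Q (v j) (v (j + 1))) := by
        simp only [wordProb]; ring
    _ ≤ _ := by gcongr; exact (hpos _ _).le

lemma hasMixingLowerBound_of_hasMarkovLaw [MeasurableSpace α] [MeasurableSingletonClass α]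
    {μ : Measure Ω} [IsProbabilityMeasure μ] {U : ℕ → Ω → α} (hU : ∀ n, Measurable (U n))
    (hQpos : ∀ u v, 0 < Q u v) (hQrow : ∀ u, ∑ v, Q u v = 1)
    (hppos : ∀ u, 0 < p u) (hpsum : ∑ u, p u = 1)
    (hpinv : ∀ v, ∑ u, p u * Q u v = p v) (hMarkov : HasMarkovLaw μ U Q p) :
    HasMixingLowerBound μ U (minEntry Q) := fun a r w v => by
  simpa only [measureReal_cylinder hU hpinv hMarkov] using
    minEntry_mul_wordProb_le hQpos hQrow hppos hpsum a r w v

end MarkovChain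

section Pathwise

variable {Ω α : Type*} {U : ℕ → Ω → α} {s : ℕ → α} {ω : Ω}

/-- The reversed prefix `s_r ⋯ s_1` (the letters of `s` are `s 1, s 2, …`). -/
def revPrefix (s : ℕ → α) (r : ℕ) : ℕ → α := fun i => s (r - i)

/-- `U_e U_{e-1} ⋯ U_{e-r+1} = s_1 ⋯ s_r`, the condition in the definition of `Z_r`. -/
def OccursAt (U : ℕ → Ω → α) (s : ℕ → α) (r e : ℕ) (ω : Ω) : Prop :=
  ∀ j < r, U (e - j) ω = s (j + 1)

lemma OccursAt.mono {r r' e : ℕ} (h : OccursAt U s r e ω) (hr : r' ≤ r) :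
    OccursAt U s r' e ω :=
  fun j hj => h j (by omega)

lemma mem_cylinder_revPrefix_iff {t r : ℕ} :
    ω ∈ cylinder U t r (revPrefix s r) ↔ OccursAt U s r (t + r) ω := by
  constructor
  · intro h j hj
    simpa [revPrefix, show t + 1 + (r - 1 - j) = t + r - j by omega,
      show r - (r - 1 - j) = j + 1 by omega] using h (r - 1 - j) (by omega)
  · intro h i hi
    simpa [revPrefix, show t + r - (r - 1 - i) = t + 1 + i by omega,
      show r - 1 - i + 1 = r - i by omega] using h (r - 1 - i) (by omega)

/-- Outside this set some `Z_r` is the junk value `sInf ∅ = 0`. -/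
def recurrentSet (U : ℕ → Ω → α) (s : ℕ → α) : Set Ω :=
  {ω | ∀ r M, ∃ t, M ≤ t ∧ ω ∈ cylinder U t r (revPrefix s r)}

variable {U : ℕ → Ω → Fin 4} {s : ℕ → Fin 4}

lemma Tfun_succ (r : ℕ) : Tfun U s (r + 1) ω
    = Tfun U s r ω + sInf {n | 1 ≤ n ∧ OccursAt U s (r + 1) (n + Tfun U s r ω) ω} :=
  rfl

lemma Tfun_mono : Monotone fun r => Tfun U s r ω :=
  monotone_nat_of_le_succ fun r => by rw [Tfun_succ]; exact Nat.le_add_right _ _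

lemma Tfun_succ_le {r e : ℕ} (h : Tfun U s r ω < e) (ho : OccursAt U s (r + 1) e ω) :
    Tfun U s (r + 1) ω ≤ e := by
  have hmem : e - Tfun U s r ω ∈ {n | 1 ≤ n ∧ OccursAt U s (r + 1) (n + Tfun U s r ω) ω} :=
    ⟨by omega, by rwa [Nat.sub_add_cancel h.le]⟩
  have := Nat.sInf_le hmem
  rw [Tfun_succ]
  omega

lemma le_Tfun_and_occursAt (hω : ω ∈ recurrentSet U s) (r : ℕ) :
    r ≤ Tfun U s r ω ∧ OccursAt U s r (Tfun U s r ω) ω := by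
  induction r with
  | zero => exact ⟨le_rfl, fun j hj => absurd hj (Nat.not_lt_zero j)⟩
  | succ r ih =>
    obtain ⟨t, ht, hcyl⟩ := hω (r + 1) (Tfun U s r ω)
    rw [mem_cylinder_revPrefix_iff] at hcyl
    have hmem : t + (r + 1) - Tfun U s r ω
        ∈ {n | 1 ≤ n ∧ OccursAt U s (r + 1) (n + Tfun U s r ω) ω} :=
      ⟨by omega, by rwa [Nat.sub_add_cancel (by omega)]⟩
    obtain ⟨hpos, hocc⟩ := Nat.sInf_mem ⟨_, hmem⟩
    rw [Tfun_succ, add_comm (Tfun U s r ω)]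
    exact ⟨by omega, hocc⟩

lemma le_Xfun_iff (hω : ω ∈ recurrentSet U s) {n k : ℕ} :
    k ≤ Xfun U s n ω ↔ Tfun U s k ω ≤ n := by
  have hbdd : BddAbove {k | Tfun U s k ω ≤ n} :=
    ⟨n, fun k hk => (le_Tfun_and_occursAt hω k).1.trans hk⟩
  exact ⟨fun h => (Tfun_mono h).trans (Nat.sSup_mem ⟨0, Nat.zero_le n⟩ hbdd),
    fun h => le_csSup hbdd h⟩

lemma Xfun_mono (hω : ω ∈ recurrentSet U s) {n n' : ℕ} (h : n ≤ n') :
    Xfun U s n ω ≤ Xfun U s n' ω :=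
  (le_Xfun_iff hω).2 (((le_Xfun_iff hω).1 le_rfl).trans h)

lemma exists_mem_cylinder_of_le_Xfun (hω : ω ∈ recurrentSet U s) {k n : ℕ} (hk : 1 ≤ k)
    (h : k ≤ Xfun U s n ω) : ∃ t < n, ω ∈ cylinder U t k (revPrefix s k) := by
  have hT := (le_Xfun_iff hω).1 h
  obtain ⟨hkT, hocc⟩ := le_Tfun_and_occursAt hω k
  refine ⟨Tfun U s k ω - k, by omega, ?_⟩
  rwa [mem_cylinder_revPrefix_iff, Nat.sub_add_cancel hkT]

/-- The `g`-th window `(g G k, (g + 1) G k]` contains an occurrence ending after `T_g`,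
so `T_{g+1} ≤ (g + 1) G k`. -/
lemma le_Xfun_of_forall_exists_mem_cylinder (hω : ω ∈ recurrentSet U s) {k G n : ℕ}
    (hn : k * (G * k) ≤ n)
    (h : ∀ g < k, ∃ l < G, ω ∈ cylinder U (g * (G * k) + l * k) k (revPrefix s k)) :
    k ≤ Xfun U s n ω := by
  have key : ∀ g ≤ k, Tfun U s g ω ≤ g * (G * k) := by
    intro g
    induction g with
    | zero => intro; simp [Tfun]
    | succ g ih =>
      intro hg
      obtain ⟨l, hl, hcyl⟩ := h g (by omega)
      rw [mem_cylinder_revPrefix_iff] at hcyl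
      have hlk : (l + 1) * k ≤ G * k := Nat.mul_le_mul_right k hl
      calc Tfun U s (g + 1) ω ≤ g * (G * k) + l * k + k :=
            Tfun_succ_le (by have := ih (by omega); nlinarith) (hcyl.mono hg)
        _ ≤ (g + 1) * (G * k) := by nlinarith
  exact (le_Xfun_iff hω).2 ((key k le_rfl).trans hn)

lemma Xfun_le_of_forall_notMem_cylinder (hω : ω ∈ recurrentSet U s) {a : ℝ} (ha : 0 < a)
    {i n : ℕ} (hi : 1 ≤ i) (hn : 2 ^ i ≤ n) (hn' : n < 2 ^ (i + 1))
    (h : ∀ t < 2 ^ (i + 1),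
      ω ∉ cylinder U t ⌈a * (i * Real.log 2)⌉₊ (revPrefix s ⌈a * (i * Real.log 2)⌉₊)) :
    (Xfun U s n ω : ℝ) ≤ a * Real.log n := by
  set K := ⌈a * (i * Real.log 2)⌉₊
  have hpos : 0 < a * (i * Real.log 2) := by
    have : (1 : ℝ) ≤ i := Nat.one_le_cast.2 hi
    have := Real.log_pos one_lt_two
    positivity
  have hX : Xfun U s n ω + 1 ≤ K := by
    by_contra! hKX
    obtain ⟨t, ht, hcyl⟩ := exists_mem_cylinder_of_le_Xfun hω (Nat.ceil_pos.2 hpos)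
      ((Nat.le_of_lt_succ hKX).trans (Xfun_mono hω hn'.le))
    exact h t ht hcyl
  have hlog : (i : ℝ) * Real.log 2 ≤ Real.log n := by
    rw [← Real.log_pow]
    exact Real.log_le_log (by positivity) (by exact_mod_cast hn)
  have hK : (K : ℝ) < a * (i * Real.log 2) + 1 := Nat.ceil_lt_add_one hpos.le
  have hX' : (Xfun U s n ω : ℝ) + 1 ≤ K := by exact_mod_cast hX
  nlinarith

end Pathwise

section Asymptotics

open Real

lemma ae_eventually_notMem_of_summable {Ω : Type*} [MeasurableSpace Ω] {μ : Measure Ω}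
    [IsFiniteMeasure μ] {S : ℕ → Set Ω} {b : ℕ → ℝ} (hb : Summable b)
    (hS : ∀ i, μ.real (S i) ≤ b i) : ∀ᵐ ω ∂μ, ∀ᶠ i in atTop, ω ∉ S i := by
  have hb0 : ∀ i, 0 ≤ b i := fun i => measureReal_nonneg.trans (hS i)
  refine ae_eventually_notMem (ne_top_of_le_ne_top (ENNReal.ofReal_ne_top (r := ∑' i, b i)) ?_)
  rw [ENNReal.ofReal_tsum_of_nonneg hb0 hb]
  exact ENNReal.tsum_le_tsum fun i => by
    rw [← ofReal_measureReal]; exact ENNReal.ofReal_le_ofReal (hS i)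

variable {P : ℕ → ℝ} {h h' : ℝ}

lemma eventually_le_exp_of_tendsto (hP : ∀ n, 0 < P n)
    (hlim : Tendsto (fun n : ℕ => (1 / (n : ℝ)) * log (1 / P n)) atTop (𝓝 h)) (hh' : h' < h) :
    ∀ᶠ n : ℕ in atTop, P n ≤ exp (-(h' * n)) := by
  filter_upwards [hlim.eventually (lt_mem_nhds hh'), eventually_gt_atTop 0] with n hn hn0
  have hn0' : (0 : ℝ) < n := Nat.cast_pos.2 hn0
  rw [one_div_mul_eq_div, lt_div_iff₀ hn0', one_div, log_inv] at hn
  calc P n = exp (log (P n)) := (exp_log (hP n)).symm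
    _ ≤ exp (-(h' * n)) := exp_le_exp.2 (by linarith)

lemma eventually_exp_le_of_tendsto (hP : ∀ n, 0 < P n)
    (hlim : Tendsto (fun n : ℕ => (1 / (n : ℝ)) * log (1 / P n)) atTop (𝓝 h)) (hh' : h < h') :
    ∀ᶠ n : ℕ in atTop, exp (-(h' * n)) ≤ P n := by
  filter_upwards [hlim.eventually (gt_mem_nhds hh'), eventually_gt_atTop 0] with n hn hn0
  have hn0' : (0 : ℝ) < n := Nat.cast_pos.2 hn0
  rw [one_div_mul_eq_div, div_lt_iff₀ hn0', one_div, log_inv] at hn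
  calc exp (-(h' * n)) ≤ exp (log (P n)) := exp_le_exp.2 (by linarith)
    _ = P n := exp_log (hP n)

/-- The terms are eventually at most `2 (2 ^ (1 - a h')) ^ i`. -/
lemma summable_two_pow_mul_ceil (hP0 : ∀ n, 0 ≤ P n)
    (hP : ∀ᶠ n : ℕ in atTop, P n ≤ exp (-(h' * n))) {a : ℝ} (ha : 0 < a) (hah : 1 < a * h') :
    Summable fun i : ℕ => (2 : ℝ) ^ (i + 1) * P ⌈a * (i * log 2)⌉₊ := by
  have hh' : 0 < h' := pos_of_mul_pos_right (one_pos.trans hah) ha.le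
  set ρ := exp ((1 - a * h') * log 2)
  have hρ : ρ < 1 := exp_lt_one_iff.2 (mul_neg_of_neg_of_pos (by linarith) (log_pos one_lt_two))
  have hlin : Tendsto (fun i : ℕ => a * (i * log 2)) atTop atTop :=
    (tendsto_natCast_atTop_atTop.atTop_mul_const (log_pos one_lt_two)).const_mul_atTop ha
  refine Summable.of_norm_bounded_eventually_nat (g := fun i => 2 * ρ ^ i)
    ((summable_geometric_of_lt_one (exp_pos _).le hρ).mul_left 2) ?_
  filter_upwards [(tendsto_nat_ceil_atTop.comp hlin).eventually hP] with i hi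
  rw [norm_of_nonneg (mul_nonneg (by positivity) (hP0 _))]
  calc (2 : ℝ) ^ (i + 1) * P ⌈a * (i * log 2)⌉₊
      ≤ 2 ^ (i + 1) * exp (-(h' * (a * (i * log 2)))) := by
        gcongr
        exact hi.trans
          (exp_le_exp.2 (neg_le_neg (mul_le_mul_of_nonneg_left (Nat.le_ceil _) hh'.le)))
    _ = 2 * ρ ^ i := by
        rw [← exp_nat_mul, pow_succ, mul_comm, ← exp_log (two_pos : (0:ℝ) < 2), ← exp_nat_mul,
          exp_log two_pos, mul_comm (exp _) 2, mul_left_comm, ← exp_add]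
        congr 2
        ring

lemma one_sub_pow_le_exp {x : ℝ} (hx : x ≤ 1) (G : ℕ) : (1 - x) ^ G ≤ exp (-(x * G)) := by
  calc (1 - x) ^ G ≤ exp (-x) ^ G :=
        pow_le_pow_left₀ (by linarith) (by linarith [add_one_le_exp (-x)]) G
    _ = exp (-(x * G)) := by rw [← exp_nat_mul]; ring_nf

lemma eventually_mul_sq_mul_le_exp {a c γ : ℝ} (hc : 0 < c) (hγ : 0 < γ) :
    ∀ᶠ y : ℝ in atTop, (a * y) ^ 2 * (3 * y + 1) ≤ c * exp (γ * y) := by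
  set C := 4 * a ^ 2
  have hC : 0 < C + 1 := by positivity
  filter_upwards [(isLittleO_pow_exp_pos_mul_atTop 3 hγ).def (show 0 < c / (C + 1) by positivity),
    eventually_ge_atTop 1] with y hy hy1
  rw [norm_of_nonneg (by positivity), norm_of_nonneg (exp_pos _).le] at hy
  calc (a * y) ^ 2 * (3 * y + 1) ≤ (C + 1) * y ^ 3 := by
        have : 0 ≤ (a * y) ^ 2 * (y - 1) := mul_nonneg (sq_nonneg _) (by linarith)
        nlinarith [pow_pos (by linarith : (0:ℝ) < y) 3]
    _ ≤ (C + 1) * (c / (C + 1) * exp (γ * y)) := by gcongr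
    _ = c * exp (γ * y) := by field_simp

/-- Since `δ ≥ c n ^ (-β)` and `G = n / K² ≥ n / (a log n) ^ 2 - 1`, `hpoly` gives
`δ G ≥ 3 log n`. -/
lemma natCast_mul_one_sub_pow_le {a c β δ : ℝ} {K n : ℕ} (ha : 0 ≤ a) (hc : 0 < c) (hn : 0 < n)
    (hKn : (K : ℝ) ≤ a * log n) (hδ1 : δ ≤ 1) (hδ : c * exp (-(β * log n)) ≤ δ)
    (hpoly : (a * log n) ^ 2 * (3 * log n + 1) ≤ c * exp ((1 - β) * log n)) :
    K * (1 - δ) ^ (n / (K * K)) ≤ a * (1 / (n : ℝ) ^ 2) := by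
  set y := log (n : ℝ)
  set G := n / (K * K)
  have hn0 : (0 : ℝ) < n := Nat.cast_pos.2 hn
  have hδ0 : 0 ≤ δ := (by positivity : 0 ≤ c * exp _).trans hδ
  rcases Nat.eq_zero_or_pos K with hK | hK
  · rw [hK, Nat.cast_zero, zero_mul]; positivity
  have hK1 : (1 : ℝ) ≤ K := Nat.one_le_cast.2 hK
  have hexpn : exp y = n := exp_log hn0
  have hG : (n : ℝ) / (K * K) - 1 ≤ G := by
    have h : n ≤ (G + 1) * (K * K) := by
      rw [add_mul, one_mul]; exact (Nat.lt_div_mul_add (Nat.mul_pos hK hK)).le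
    rw [sub_le_iff_le_add, div_le_iff₀ (by positivity)]
    exact_mod_cast h
  have hsuff : 3 * y + 1 ≤ δ * n / (K * K) :=
    calc 3 * y + 1 ≤ c * exp ((1 - β) * y) / (a * y) ^ 2 := by
          rw [le_div_iff₀ (by nlinarith)]; linarith
      _ = c * exp (-(β * y)) * n / (a * y) ^ 2 := by
          rw [← hexpn, mul_assoc, ← exp_add]; ring_nf
      _ ≤ δ * n / (K * K) := by
          gcongr
          nlinarith
  have hδG : 3 * y ≤ δ * G :=
    calc 3 * y ≤ δ * (n / (K * K) - 1) := by
          rw [mul_sub, mul_one, ← mul_div_assoc]; linarith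
      _ ≤ δ * G := mul_le_mul_of_nonneg_left hG hδ0
  have hKn' : (K : ℝ) ≤ a * n := hKn.trans (mul_le_mul_of_nonneg_left
    ((log_le_sub_one_of_pos hn0).trans (sub_le_self _ zero_le_one)) ha)
  calc K * (1 - δ) ^ G ≤ (a * n) * exp (-(3 * y)) :=
        mul_le_mul hKn' ((one_sub_pow_le_exp hδ1 G).trans (exp_le_exp.2 (neg_le_neg hδG)))
          (pow_nonneg (by linarith) _) (by positivity)
    _ = a * (1 / (n : ℝ) ^ 2) := by
        rw [exp_neg, show 3 * y = ((3 : ℕ) : ℝ) * y by norm_num, exp_nat_mul, hexpn]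
        field_simp

lemma summable_mul_one_sub_pow {δ : ℕ → ℝ} {k : ℕ → ℕ} {a c β : ℝ} (ha : 0 ≤ a) (hc : 0 < c)
    (hβ : β < 1) (hk : ∀ n, (k n : ℝ) ≤ a * log n) (hδ1 : ∀ n, δ n ≤ 1)
    (hδ : ∀ᶠ n : ℕ in atTop, c * exp (-(β * log n)) ≤ δ n) :
    Summable fun n => (k n : ℝ) * (1 - δ n) ^ (n / (k n * k n)) := by
  have hlog : Tendsto (fun n : ℕ => log (n : ℝ)) atTop atTop :=
    tendsto_log_atTop.comp tendsto_natCast_atTop_atTop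
  refine Summable.of_norm_bounded_eventually_nat (g := fun n : ℕ => a * (1 / (n : ℝ) ^ 2))
    ((summable_one_div_nat_pow.2 one_lt_two).mul_left a) ?_
  filter_upwards [hlog.eventually (eventually_mul_sq_mul_le_exp (a := a) hc (sub_pos.2 hβ)), hδ,
    eventually_gt_atTop 0] with n hpoly hδn hn
  rw [norm_of_nonneg (mul_nonneg (Nat.cast_nonneg _) (pow_nonneg (by linarith [hδ1 n]) _))]
  exact natCast_mul_one_sub_pow_le ha hc hn (hk n) (hδ1 n) hδn hpoly

lemma eventually_exp_le_comp_floor {a h' : ℝ} (ha : 0 < a) (hh' : 0 ≤ h')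
    (hP : ∀ᶠ n : ℕ in atTop, exp (-(h' * n)) ≤ P n) :
    ∀ᶠ n : ℕ in atTop, exp (-(a * h' * log n)) ≤ P ⌊a * log n⌋₊ := by
  have hfloor : Tendsto (fun n : ℕ => ⌊a * log n⌋₊) atTop atTop :=
    tendsto_nat_floor_atTop.comp
      ((tendsto_log_atTop.comp tendsto_natCast_atTop_atTop).const_mul_atTop ha)
  filter_upwards [hfloor.eventually hP] with n hn
  refine (exp_le_exp.2 ?_).trans hn
  have := mul_le_mul_of_nonneg_left (Nat.floor_le (by positivity : 0 ≤ a * log n)) hh'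
  linarith

lemma tendsto_div_of_forall_rat_bounds {f L : ℕ → ℝ} {h : ℝ} (hh : 0 < h)
    (hL : Tendsto L atTop atTop)
    (hup : ∀ q : ℚ, 0 < q → 1 < q * h → ∀ᶠ n in atTop, f n ≤ q * L n)
    (hlow : ∀ q : ℚ, 0 < q → q * h < 1 → ∀ᶠ n in atTop, q * L n - 1 ≤ f n) :
    Tendsto (fun n => f n / L n) atTop (𝓝 (1 / h)) := by
  refine tendsto_order.2 ⟨fun b hb => ?_, fun b hb => ?_⟩
  · obtain ⟨q, hbq, hq⟩ := exists_rat_btwn (max_lt hb (one_div_pos.2 hh))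
    have hq0 : (0 : ℝ) < q := (le_max_right _ _).trans_lt hbq
    have hbq' : b < q := (le_max_left _ _).trans_lt hbq
    have hqh : (q : ℝ) * h < 1 := (lt_div_iff₀ hh).1 (by simpa using hq)
    filter_upwards [hlow q (by exact_mod_cast hq0) hqh,
      hL.eventually_gt_atTop (1 / (q - b)), hL.eventually_gt_atTop 0] with n hn hLb hL0
    rw [div_lt_iff₀ (sub_pos.2 hbq')] at hLb
    rw [lt_div_iff₀ hL0]
    linarith
  · obtain ⟨q, hq, hqb⟩ := exists_rat_btwn hb
    have hq0 : (0 : ℝ) < q := (one_div_pos.2 hh).trans hq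
    have hqh : 1 < (q : ℝ) * h := by
      rw [one_div, inv_lt_iff_one_lt_mul₀ hh] at hq; linarith
    filter_upwards [hup q (by exact_mod_cast hq0) hqh, hL.eventually_gt_atTop 0] with n hn hL0
    rw [div_lt_iff₀ hL0]
    nlinarith

end Asymptotics

section BranchLength

open Real

variable {Ω : Type*} [MeasurableSpace Ω] {μ : Measure Ω} [IsProbabilityMeasure μ]
  {U : ℕ → Ω → Fin 4} {s : ℕ → Fin 4} {ω : Ω}

lemma pinf_eq_measureReal (μ : Measure Ω) (U : ℕ → Ω → Fin 4) (s : ℕ → Fin 4) (n : ℕ) :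
    pinf μ U s n = μ.real (cylinder U 0 n (revPrefix s n)) := by
  have hset : {ω | ∀ i : Fin n, U (i.1 + 1) ω = s (n - i.1)} = cylinder U 0 n (revPrefix s n) := by
    ext ω
    simp only [cylinder, revPrefix, zero_add, add_comm 1]
    exact ⟨fun h i hi => h ⟨i, hi⟩, fun h i => h i i.2⟩
  rw [pinf, hset, measureReal_def]

lemma ae_mem_recurrentSet (hU : ∀ n, Measurable (U n)) {c : ℝ}
    (hmix : HasMixingLowerBound μ U c) (hc : 0 < c) (hpos : ∀ n, 0 < pinf μ U s n) :
    ∀ᵐ ω ∂μ, ω ∈ recurrentSet U s :=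
  ae_all_iff.2 fun r => ae_forall_exists_mem_cylinder hU (mul_pos hc (hpos r)) fun a w => by
    rw [pinf_eq_measureReal]
    exact hmix a r w (revPrefix s r)

lemma ae_eventually_Xfun_le (hstat : IsStationary μ U)
    (hpos : ∀ n, 0 < pinf μ U s n) {h : ℝ}
    (hlim : Tendsto (fun n : ℕ => (1 / (n : ℝ)) * log (1 / pinf μ U s n)) atTop (𝓝 h))
    {a : ℝ} (ha : 0 < a) (hah : 1 < a * h) :
    ∀ᵐ ω ∂μ, ω ∈ recurrentSet U s → ∀ᶠ n : ℕ in atTop, (Xfun U s n ω : ℝ) ≤ a * log n := by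
  obtain ⟨h', hh', hh'h⟩ := exists_between ((div_lt_iff₀' ha).2 hah)
  set K : ℕ → ℕ := fun i => ⌈a * (i * log 2)⌉₊
  set S : ℕ → Set Ω := fun i =>
    ⋃ t ∈ range (2 ^ (i + 1)), cylinder U t (K i) (revPrefix s (K i))
  have hS : ∀ i, μ.real (S i) ≤ 2 ^ (i + 1) * pinf μ U s (K i) := fun i => by
    refine (measureReal_biUnion_finset_le _ _).trans_eq ?_
    simp [measureReal_def, hstat _ (K i), pinf_eq_measureReal]
  have hsum := summable_two_pow_mul_ceil (fun n => (hpos n).le)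
    (eventually_le_exp_of_tendsto hpos hlim hh'h) ha ((div_lt_iff₀' ha).1 hh')
  filter_upwards [ae_eventually_notMem_of_summable hsum hS] with ω hω hrec
  obtain ⟨I, hI⟩ := eventually_atTop.1 hω
  filter_upwards [eventually_ge_atTop (2 ^ max I 1)] with n hn
  have hn0 : n ≠ 0 := Nat.one_le_iff_ne_zero.1 (Nat.one_le_two_pow.trans hn)
  have hi : max I 1 ≤ Nat.log 2 n := Nat.le_log_of_pow_le one_lt_two hn
  exact Xfun_le_of_forall_notMem_cylinder hrec ha (le_of_max_le_right hi)
    (Nat.pow_log_le_self 2 hn0) (Nat.lt_pow_succ_log_self one_lt_two n)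
    fun t ht hcyl => hI _ (le_of_max_le_left hi) (Set.mem_biUnion (mem_range.2 ht) hcyl)

lemma ae_eventually_le_Xfun (hU : ∀ n, Measurable (U n)) {c : ℝ}
    (hmix : HasMixingLowerBound μ U c) (hc : 0 < c) (hpos : ∀ n, 0 < pinf μ U s n) {h : ℝ}
    (hlim : Tendsto (fun n : ℕ => (1 / (n : ℝ)) * log (1 / pinf μ U s n)) atTop (𝓝 h))
    {a : ℝ} (ha : 0 < a) (hah : a * h < 1) :
    ∀ᵐ ω ∂μ, ω ∈ recurrentSet U s → ∀ᶠ n : ℕ in atTop, a * log n - 1 ≤ (Xfun U s n ω : ℝ) := by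
  obtain ⟨h', hhh', hh'a⟩ := exists_between (max_lt ((lt_div_iff₀' ha).2 hah) (one_div_pos.2 ha))
  set k : ℕ → ℕ := fun n => ⌊a * log n⌋₊
  set G : ℕ → ℕ := fun n => n / (k n * k n)
  set δ : ℕ → ℝ := fun n => c * pinf μ U s (k n)
  set S : ℕ → Set Ω := fun n => ⋃ g ∈ range (k n),
    noOccurrence U (revPrefix s (k n)) (k n) (g * (G n * k n)) (G n)
  have hmix' : ∀ r a w, c * pinf μ U s r * μ.real (cylinder U 0 a w)
      ≤ μ.real (cylinder U 0 (a + r) (patch w a fun j : Fin r => revPrefix s r j)) :=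
    fun r a w => by rw [pinf_eq_measureReal]; exact hmix a r w _
  have hδ1 : ∀ n, δ n ≤ 1 := fun n => le_one_of_forall_mul_measureReal_le (hmix' (k n))
  have hS : ∀ n, μ.real (S n) ≤ k n * (1 - δ n) ^ G n := fun n => by
    refine (measureReal_biUnion_finset_le _ _).trans ?_
    refine (sum_le_sum fun g _ => measureReal_noOccurrence_le hU (hmix' (k n)) _ _).trans_eq ?_
    rw [sum_const, card_range, nsmul_eq_mul]
  have hh'0 : 0 < h' := (le_max_right _ _).trans_lt hhh'
  have hδ : ∀ᶠ n : ℕ in atTop, c * exp (-(a * h' * log n)) ≤ δ n :=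
    (eventually_exp_le_comp_floor ha hh'0.le
      (eventually_exp_le_of_tendsto hpos hlim ((le_max_left _ _).trans_lt hhh'))).mono
      fun n hn => mul_le_mul_of_nonneg_left hn hc.le
  have hsum := summable_mul_one_sub_pow ha.le hc ((lt_div_iff₀' ha).1 hh'a)
    (fun n => Nat.floor_le (by positivity)) hδ1 hδ
  filter_upwards [ae_eventually_notMem_of_summable hsum hS] with ω hω hrec
  filter_upwards [hω] with n hn
  have hkG : k n * (G n * k n) ≤ n :=
    calc k n * (G n * k n) = G n * (k n * k n) := by ring
      _ ≤ n := Nat.div_mul_le_self _ _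
  have hkX := le_Xfun_of_forall_exists_mem_cylinder hrec hkG fun g hg => by
    by_contra! hno
    exact hn (Set.mem_biUnion (mem_range.2 hg) hno)
  calc a * log n - 1 ≤ k n := (Nat.sub_one_lt_floor _).le
    _ ≤ Xfun U s n ω := by exact_mod_cast hkX

end BranchLength

end CGR

open CGR

/-- If `s ∈ 𝒜^ℕ` is such that `h(s) = lim_n (1/n) ln (1 / p(s^(n)))`
exists and is positive, then `X_n(s) / ln n → 1 / h(s)` almost surely. -/
theorem branch_length_lemma
    {Ω : Type*} [MeasurableSpace Ω] (μ : Measure Ω) [IsProbabilityMeasure μ]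
    (U : ℕ → Ω → Fin 4) (hU : ∀ n, Measurable (U n))
    (Q : Fin 4 → Fin 4 → ℝ) (p : Fin 4 → ℝ)
    (hQpos : ∀ u v, 0 < Q u v) (hQrow : ∀ u, ∑ v, Q u v = 1)
    (hppos : ∀ u, 0 < p u) (hpsum : ∑ u, p u = 1)
    (hpinv : ∀ v, ∑ u, p u * Q u v = p v)
    (hMarkov : ∀ (n : ℕ) (w : Fin (n + 1) → Fin 4),
      (μ {ω | ∀ i : Fin (n + 1), U (i.1 + 1) ω = w i}).toReal
        = p (w 0) * ∏ i : Fin n, Q (w i.castSucc) (w i.succ))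
    (s : ℕ → Fin 4) (hs : ℝ) (hs_pos : 0 < hs)
    (hs_lim : Tendsto (fun n : ℕ => (1 / (n : ℝ)) * Real.log (1 / pinf μ U s n))
      atTop (nhds hs)) :
    ∀ᵐ ω ∂μ, Tendsto (fun n : ℕ => ((Xfun U s n ω : ℕ) : ℝ) / Real.log n)
      atTop (nhds (1 / hs)) := by
  have hstat := isStationary_of_hasMarkovLaw hU hpinv hMarkov
  have hmix := hasMixingLowerBound_of_hasMarkovLaw hU hQpos hQrow hppos hpsum hpinv hMarkov
  have hpos : ∀ n, 0 < pinf μ U s n := fun n => by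
    rw [pinf_eq_measureReal, measureReal_cylinder hU hpinv hMarkov]
    exact wordProb_pos hQpos hppos _ _
  have hup : ∀ᵐ ω ∂μ, ∀ q : ℚ, 0 < q → 1 < q * hs → ω ∈ recurrentSet U s →
      ∀ᶠ n : ℕ in atTop, (Xfun U s n ω : ℝ) ≤ q * Real.log n :=
    ae_all_iff.2 fun q => eventually_imp_distrib_left.2 fun hq0 => eventually_imp_distrib_left.2
      fun hq => ae_eventually_Xfun_le hstat hpos hs_lim (by exact_mod_cast hq0) hq
  have hlow : ∀ᵐ ω ∂μ, ∀ q : ℚ, 0 < q → q * hs < 1 → ω ∈ recurrentSet U s →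
      ∀ᶠ n : ℕ in atTop, q * Real.log n - 1 ≤ (Xfun U s n ω : ℝ) :=
    ae_all_iff.2 fun q => eventually_imp_distrib_left.2 fun hq0 => eventually_imp_distrib_left.2
      fun hq => ae_eventually_le_Xfun hU hmix (minEntry_pos hQpos) hpos hs_lim
        (by exact_mod_cast hq0) hq
  filter_upwards [ae_mem_recurrentSet hU hmix (minEntry_pos hQpos) hpos, hup, hlow]
    with ω hrec hup hlow
  exact tendsto_div_of_forall_rat_bounds hs_pos
    (Real.tendsto_log_atTop.comp tendsto_natCast_atTop_atTop)
    (fun q hq0 hq => hup q hq0 hq hrec) (fun q hq0 hq => hlow q hq0 hq hrec)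
end
end

section
/- Fix s ∈ 𝒜^ℕ and r ≥ 1, and define for real t the function D(t) := p(s^(r))·t^r + ((1−t)·p(s^(r))·t^{r−1}/p(s_r))·Σ_{z≥1} (Q^z(s_1, s_r) − p(s_r))·t^z + (1−t)·(1 + Σ_{j=2}^{r} t^{j−1}·(p(s^(j))/p(s_j))·1{(s_r, s_{r−1}, …, s_j) = (s_{r−j+1}, s_{r−j}, …, s_1)}), the series being convergent for |t| < 1/γ. Then D(t) ≠ 0 for all t ∈ [0,1], and there exists a constant κ > 0, independent of r and of s, such that every real zero t of D with 1 < t < 1/γ satisfies t ≥ 1 + κ·p(s^(r)). -/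
/-!
On `[0, 1)` each coefficient `Q^z(s₁, s_r) - p(s_r)` is at least `-p(s_r)`, so `(1 - t)` times the
correlation series is at least `-p(s_r) t`. This cancels the leading term `p(s^(r)) t^r` exactly and
leaves `D(t) ≥ (1 - t)(1 + overlap sum) > 0`, while `D(1) = p(s^(r))`.

For `t > 1` write `D(t) = p(s^(r)) t^r - (t - 1) X(t)`. Let `M = max(γ, max Q) < 1`. The bounds
`p(s^(k+1)) ≤ (max Q)^k` and `|Q^z - p| ≤ K γ^z` bound `X` on `[1, 1 + (1 - M)/2]` by a
constant `C` that does not depend on `r` or `s`. A zero there forces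
`p(s^(r)) ≤ p(s^(r)) t^r ≤ (t - 1) C`. A zero beyond that range is at distance at least
`(1 - M)/2` from `1`, and `p(s^(r)) ≤ 1`. So `κ = min((1 - M)/2, 1/C)` works.
-/

open MeasureTheory Filter Finset Classical

noncomputable section

/-- `Dden μ U Q p s r t` is the denominator `D(t)` of the Daudin–Robin formula
`Φ(s^(r), t) = (γ_r(t) + (1-t) δ_r(t⁻¹))⁻¹`, namely
`D(t) = p(s^(r)) t^r + ((1-t) p(s^(r)) t^{r-1} / p(s_r)) ∑_{z ≥ 1} (Q^z(s_1,s_r) − p(s_r)) t^z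
+ (1-t) (1 + ∑_{j=2}^r t^{j-1} (p(s^(j))/p(s_j)) 1{(s_r, …, s_j) = (s_{r-j+1}, …, s_1)})`. -/
def Dden {Ω : Type*} [MeasurableSpace Ω] (μ : Measure Ω) (U : ℕ → Ω → Fin 4)
    (Q : Matrix (Fin 4) (Fin 4) ℝ) (p : Fin 4 → ℝ)
    (s : ℕ → Fin 4) (r : ℕ) (t : ℝ) : ℝ :=
  pinf μ U s r * t ^ r
    + (1 - t) * pinf μ U s r * t ^ (r - 1) / p (s r) *
        ∑' z : ℕ, ((Q ^ (z + 1)) (s 1) (s r) - p (s r)) * t ^ (z + 1)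
    + (1 - t) * (1 + ∑ j ∈ Finset.Icc 2 r,
        t ^ (j - 1) * (pinf μ U s j / p (s j)) *
          (if ∀ i ∈ Finset.range (r - j + 1), s (r - i) = s (r - j + 1 - i)
            then (1 : ℝ) else 0))

lemma Matrix.apply_lt_one_of_pos_of_sum_eq_one {n : Type*} [Fintype n] [Nontrivial n]
    {Q : Matrix n n ℝ} (hQ : ∀ u v, 0 < Q u v) (hrow : ∀ u, ∑ v, Q u v = 1) (u v : n) :
    Q u v < 1 := by
  obtain ⟨w, hwv⟩ := exists_ne v
  rw [← hrow u]
  exact single_lt_sum hwv (mem_univ v) (mem_univ w) (hQ u w) fun k _ _ => (hQ u k).le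

section Series

variable {a : ℕ → ℝ} {c K γ t : ℝ}

lemma abs_mul_pow_succ_le (ht : 0 ≤ t) (ha : ∀ z, |a z| ≤ K * γ ^ (z + 1)) (z : ℕ) :
    ‖a z * t ^ (z + 1)‖ ≤ K * (γ * t) * (γ * t) ^ z := by
  rw [Real.norm_eq_abs, abs_mul, abs_of_nonneg (pow_nonneg ht _)]
  calc |a z| * t ^ (z + 1) ≤ K * γ ^ (z + 1) * t ^ (z + 1) := by gcongr; exact ha z
    _ = K * (γ * t) * (γ * t) ^ z := by ring

lemma summable_mul_pow_succ (hγ : 0 ≤ γ) (ht : 0 ≤ t) (hγt : γ * t < 1)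
    (ha : ∀ z, |a z| ≤ K * γ ^ (z + 1)) : Summable fun z => a z * t ^ (z + 1) :=
  ((summable_geometric_of_lt_one (by positivity) hγt).mul_left _).of_norm_bounded
    (abs_mul_pow_succ_le ht ha)

lemma abs_tsum_mul_pow_succ_le (hγ : 0 ≤ γ) (ht : 0 ≤ t) (hγt : γ * t < 1)
    (ha : ∀ z, |a z| ≤ K * γ ^ (z + 1)) :
    |∑' z, a z * t ^ (z + 1)| ≤ K * (γ * t) / (1 - γ * t) :=
  tsum_of_norm_bounded ((hasSum_geometric_of_lt_one (by positivity) hγt).mul_left _)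
    (abs_mul_pow_succ_le ht ha)

lemma neg_mul_le_one_sub_mul_tsum (ht0 : 0 ≤ t) (ht1 : t < 1)
    (hs : Summable fun z => a z * t ^ (z + 1)) (ha : ∀ z, -c ≤ a z) :
    -(c * t) ≤ (1 - t) * ∑' z, a z * t ^ (z + 1) := by
  have hgeom := (hasSum_geometric_of_lt_one ht0 ht1).mul_left (-c * t)
  have hle : -c * t * (1 - t)⁻¹ ≤ ∑' z, a z * t ^ (z + 1) :=
    hasSum_le (fun z => by
      rw [mul_assoc, ← pow_succ']
      exact mul_le_mul_of_nonneg_right (ha z) (pow_nonneg ht0 _)) hgeom hs.hasSum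
  have h1t : 0 < 1 - t := by linarith
  calc -(c * t) = (1 - t) * (-c * t * (1 - t)⁻¹) := by field_simp
    _ ≤ _ := by gcongr

end Series

lemma le_sub_one_mul_of_add_one_sub_mul_eq_zero {P t X C : ℝ} {r : ℕ} (hP : 0 ≤ P)
    (ht : 1 ≤ t) (hX : |X| ≤ C) (h : P * t ^ r + (1 - t) * X = 0) : P ≤ (t - 1) * C :=
  calc P ≤ P * t ^ r := le_mul_of_one_le_right hP (one_le_pow₀ ht)
    _ = (t - 1) * X := by linarith
    _ ≤ (t - 1) * C := mul_le_mul_of_nonneg_left ((le_abs_self X).trans hX) (by linarith)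

lemma mul_le_one_add_div_two {a M t : ℝ} (ha : 0 ≤ a) (haM : a ≤ M) (ht : 0 ≤ t)
    (htM : t ≤ 1 + (1 - M) / 2) : a * t ≤ (1 + M) / 2 := by
  nlinarith [mul_le_mul haM htM ht (ha.trans haM), sq_nonneg (1 - M)]

def correlationSeries (Q : Matrix (Fin 4) (Fin 4) ℝ) (p : Fin 4 → ℝ) (s : ℕ → Fin 4)
    (r : ℕ) (t : ℝ) : ℝ :=
  ∑' z : ℕ, ((Q ^ (z + 1)) (s 1) (s r) - p (s r)) * t ^ (z + 1)

def overlapSum {Ω : Type*} [MeasurableSpace Ω] (μ : Measure Ω) (U : ℕ → Ω → Fin 4)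
    (p : Fin 4 → ℝ) (s : ℕ → Fin 4) (r : ℕ) (t : ℝ) : ℝ :=
  ∑ j ∈ Icc 2 r, t ^ (j - 1) * (pinf μ U s j / p (s j)) *
    (if ∀ i ∈ range (r - j + 1), s (r - i) = s (r - j + 1 - i) then (1 : ℝ) else 0)

def HasMarkovMarginals {Ω : Type*} [MeasurableSpace Ω] (μ : Measure Ω)
    (U : ℕ → Ω → Fin 4) (Q : Matrix (Fin 4) (Fin 4) ℝ) (p : Fin 4 → ℝ) : Prop :=
  ∀ (n : ℕ) (w : Fin (n + 1) → Fin 4),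
    (μ {ω | ∀ i : Fin (n + 1), U (i.1 + 1) ω = w i}).toReal
      = p (w 0) * ∏ i : Fin n, Q (w i.castSucc) (w i.succ)

def tailBound (ρ K pm : ℝ) : ℝ := (K + 1) / ((1 - ρ) * pm) + 1

-- With `γ` and all entries of `Q` at most `M`, a factor `t ≤ 1 + (1 - M) / 2` keeps them at most
-- `(1 + M) / 2`, the range where `tailBound` applies.
def zeroGap (M K pm : ℝ) : ℝ := min ((1 - M) / 2) (tailBound ((1 + M) / 2) K pm)⁻¹

lemma tailBound_pos {ρ K pm : ℝ} (hρ : ρ < 1) (hK : 0 ≤ K) (hpm : 0 < pm) :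
    0 < tailBound ρ K pm := by
  have : 0 < 1 - ρ := by linarith
  unfold tailBound
  positivity

lemma zeroGap_pos {M K pm : ℝ} (hM : M < 1) (hK : 0 ≤ K) (hpm : 0 < pm) : 0 < zeroGap M K pm :=
  lt_min (by linarith) (inv_pos.2 (tailBound_pos (by linarith) hK hpm))

section Markov

variable {Ω : Type*} [MeasurableSpace Ω] {μ : Measure Ω} {U : ℕ → Ω → Fin 4}
  {Q : Matrix (Fin 4) (Fin 4) ℝ} {p : Fin 4 → ℝ} {s : ℕ → Fin 4} {r : ℕ} {t : ℝ}

lemma Dden_eq :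
    Dden μ U Q p s r t = pinf μ U s r * t ^ r + (1 - t) *
      (pinf μ U s r * t ^ (r - 1) / p (s r) * correlationSeries Q p s r t
        + (1 + overlapSum μ U p s r t)) := by
  unfold Dden correlationSeries overlapSum
  ring

lemma Dden_one : Dden μ U Q p s r 1 = pinf μ U s r := by
  simp [Dden]

lemma pinf_nonneg (n : ℕ) : 0 ≤ pinf μ U s n := ENNReal.toReal_nonneg

lemma pinf_succ_eq
    (hMarkov : HasMarkovMarginals μ U Q p) (k : ℕ) :
    pinf μ U s (k + 1) = p (s (k + 1)) * ∏ i : Fin k, Q (s (k + 1 - i)) (s (k - i)) := by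
  simpa [pinf] using hMarkov k fun i => s (k + 1 - i)

lemma pinf_succ_pos
    (hMarkov : HasMarkovMarginals μ U Q p)
    (hp : ∀ u, 0 < p u) (hQ : ∀ u v, 0 < Q u v) (k : ℕ) : 0 < pinf μ U s (k + 1) := by
  rw [pinf_succ_eq hMarkov]
  exact mul_pos (hp _) (prod_pos fun i _ => hQ _ _)

lemma pinf_succ_le_pow {q : ℝ}
    (hMarkov : HasMarkovMarginals μ U Q p)
    (hp1 : ∀ u, p u ≤ 1) (hQ0 : ∀ u v, 0 ≤ Q u v) (hQq : ∀ u v, Q u v ≤ q) (k : ℕ) :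
    pinf μ U s (k + 1) ≤ q ^ k := by
  rw [pinf_succ_eq hMarkov]
  calc p (s (k + 1)) * ∏ i : Fin k, Q (s (k + 1 - i)) (s (k - i))
      ≤ 1 * ∏ _i : Fin k, q :=
        mul_le_mul (hp1 _) (prod_le_prod (fun i _ => hQ0 _ _) fun i _ => hQq _ _)
          (prod_nonneg fun i _ => hQ0 _ _) zero_le_one
    _ = q ^ k := by simp

lemma overlapSum_nonneg (hp : ∀ u, 0 ≤ p u) (ht : 0 ≤ t) : 0 ≤ overlapSum μ U p s r t := by
  refine sum_nonneg fun j _ => mul_nonneg ?_ (by split_ifs <;> norm_num)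
  exact mul_nonneg (pow_nonneg ht _) (div_nonneg (pinf_nonneg j) (hp _))

lemma overlapSum_le {q ρ pm : ℝ} (hpinf : ∀ k, pinf μ U s (k + 1) ≤ q ^ k)
    (hpm : 0 < pm) (hpmp : ∀ u, pm ≤ p u) (ht : 0 ≤ t) (hq : 0 ≤ q) (hqt : q * t ≤ ρ)
    (hρ : ρ < 1) : overlapSum μ U p s r t ≤ 1 / ((1 - ρ) * pm) := by
  have hρ0 : 0 ≤ ρ := (mul_nonneg hq ht).trans hqt
  have hterm : ∀ k, t ^ k * (pinf μ U s (k + 1) / p (s (k + 1))) ≤ ρ ^ k / pm := fun k =>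
    calc t ^ k * (pinf μ U s (k + 1) / p (s (k + 1)))
        = t ^ k * pinf μ U s (k + 1) / p (s (k + 1)) := by ring
      _ ≤ (q * t) ^ k / pm := by
          rw [mul_pow, mul_comm (q ^ k)]
          gcongr
          exacts [hpinf k, hpmp _]
      _ ≤ ρ ^ k / pm := by gcongr
  calc overlapSum μ U p s r t ≤ ∑ j ∈ Icc 2 r, ρ ^ (j - 1) / pm := by
        refine sum_le_sum fun j hj => ?_
        obtain ⟨k, rfl⟩ : ∃ k, j = k + 1 := ⟨j - 1, by grind⟩
        have hind : (if ∀ i ∈ range (r - (k + 1) + 1), s (r - i) = s (r - (k + 1) + 1 - i)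
            then (1 : ℝ) else 0) ≤ 1 := by split_ifs <;> norm_num
        calc _ ≤ t ^ k * (pinf μ U s (k + 1) / p (s (k + 1))) * 1 :=
              mul_le_mul_of_nonneg_left hind
                (mul_nonneg (pow_nonneg ht _) (div_nonneg (pinf_nonneg _) (hpm.le.trans (hpmp _))))
          _ ≤ ρ ^ (k + 1 - 1) / pm := by simpa using hterm k
    _ = (∑ i ∈ Ico 1 r, ρ ^ i) / pm := by
        rw [← sum_div, ← sum_Ico_add_right_sub_eq (c := 1), Ico_add_one_right_eq_Icc]
    _ ≤ ρ ^ 1 / (1 - ρ) / pm := by gcongr; exact geom_sum_Ico_le_of_lt_one hρ0 hρ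
    _ ≤ 1 / ((1 - ρ) * pm) := by
        rw [div_div]
        gcongr
        simpa using hρ.le

lemma abs_Dden_tail_le {q ρ pm K γ : ℝ} (hpinf : ∀ k, pinf μ U s (k + 1) ≤ q ^ k)
    (hpm : 0 < pm) (hpmp : ∀ u, pm ≤ p u) (hq : 0 ≤ q) (hγ : 0 ≤ γ) (hK : 0 ≤ K)
    (hbound : ∀ z, |(Q ^ (z + 1)) (s 1) (s r) - p (s r)| ≤ K * γ ^ (z + 1)) (hr : 1 ≤ r)
    (ht : 0 ≤ t) (hγt : γ * t ≤ ρ) (hqt : q * t ≤ ρ) (hρ : ρ < 1) :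
    |pinf μ U s r * t ^ (r - 1) / p (s r) * correlationSeries Q p s r t
        + (1 + overlapSum μ U p s r t)| ≤ tailBound ρ K pm := by
  obtain ⟨k, rfl⟩ : ∃ k, r = k + 1 := ⟨r - 1, by omega⟩
  rw [Nat.add_sub_cancel]
  have hρ0 : 0 ≤ ρ := (mul_nonneg hq ht).trans hqt
  have hA0 : 0 ≤ pinf μ U s (k + 1) * t ^ k / p (s (k + 1)) :=
    div_nonneg (mul_nonneg (pinf_nonneg _) (pow_nonneg ht k)) (hpm.le.trans (hpmp _))
  have hA : pinf μ U s (k + 1) * t ^ k / p (s (k + 1)) ≤ 1 / pm := by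
    have hPt : pinf μ U s (k + 1) * t ^ k ≤ 1 :=
      calc pinf μ U s (k + 1) * t ^ k ≤ q ^ k * t ^ k := by gcongr; exact hpinf k
        _ = (q * t) ^ k := (mul_pow q t k).symm
        _ ≤ 1 := pow_le_one₀ (mul_nonneg hq ht) (by linarith)
    exact div_le_div₀ zero_le_one hPt hpm (hpmp _)
  have hS : |correlationSeries Q p s (k + 1) t| ≤ K / (1 - ρ) :=
    (abs_tsum_mul_pow_succ_le hγ ht (by linarith) hbound).trans
      (div_le_div₀ hK (mul_le_of_le_one_right hK (by linarith)) (by linarith) (by linarith))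
  have hJ0 := overlapSum_nonneg (μ := μ) (U := U) (s := s) (r := k + 1)
    (fun u => hpm.le.trans (hpmp u)) ht
  have hJ := overlapSum_le (r := k + 1) hpinf hpm hpmp ht hq hqt hρ
  calc _ ≤ |pinf μ U s (k + 1) * t ^ k / p (s (k + 1)) * correlationSeries Q p s (k + 1) t|
          + |1 + overlapSum μ U p s (k + 1) t| := abs_add_le _ _
    _ ≤ 1 / pm * (K / (1 - ρ)) + (1 + 1 / ((1 - ρ) * pm)) := by
        rw [abs_mul, abs_of_nonneg hA0,
          abs_of_nonneg (show 0 ≤ 1 + overlapSum μ U p s (k + 1) t by linarith)]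
        gcongr
    _ = tailBound ρ K pm := by
        unfold tailBound
        have : 1 - ρ ≠ 0 := by linarith
        field_simp
        ring

lemma Dden_pos_of_lt_one (hp : ∀ u, 0 < p u) (hQ0 : ∀ u v, 0 ≤ Q u v) (hr : 1 ≤ r)
    (ht0 : 0 ≤ t) (ht1 : t < 1)
    (hsum : Summable fun z => ((Q ^ (z + 1)) (s 1) (s r) - p (s r)) * t ^ (z + 1)) :
    0 < Dden μ U Q p s r t := by
  obtain ⟨k, rfl⟩ : ∃ k, r = k + 1 := ⟨r - 1, by omega⟩
  rw [Dden_eq, Nat.add_sub_cancel]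
  set A := pinf μ U s (k + 1) * t ^ k / p (s (k + 1))
  have hA0 : 0 ≤ A := div_nonneg (mul_nonneg (pinf_nonneg _) (pow_nonneg ht0 k)) (hp _).le
  have hPt : pinf μ U s (k + 1) * t ^ (k + 1) = A * (p (s (k + 1)) * t) := by
    have := (hp (s (k + 1))).ne'
    simp only [A]
    field_simp
    ring
  have hS : -(p (s (k + 1)) * t) ≤ (1 - t) * correlationSeries Q p s (k + 1) t :=
    neg_mul_le_one_sub_mul_tsum ht0 ht1 hsum fun z => by
      linarith [Matrix.pow_apply_nonneg hQ0 (z + 1) (s 1) (s (k + 1))]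
  have hJ := overlapSum_nonneg (μ := μ) (U := U) (s := s) (r := k + 1) (fun u => (hp u).le) ht0
  have h1t : 0 < 1 - t := by linarith
  calc 0 < (1 - t) * (1 + overlapSum μ U p s (k + 1) t) := mul_pos h1t (by linarith)
    _ ≤ _ := by nlinarith [mul_le_mul_of_nonneg_left hS hA0]

lemma Dden_ne_zero_of_mem_Icc {K γ : ℝ} (hp : ∀ u, 0 < p u) (hQ : ∀ u v, 0 < Q u v)
    (hMarkov : HasMarkovMarginals μ U Q p)
    (hγ0 : 0 ≤ γ) (hγ1 : γ < 1)
    (hbound : ∀ z, |(Q ^ (z + 1)) (s 1) (s r) - p (s r)| ≤ K * γ ^ (z + 1)) (hr : 1 ≤ r)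
    (ht : t ∈ Set.Icc 0 1) : Dden μ U Q p s r t ≠ 0 := by
  obtain ⟨ht0, ht1⟩ := ht
  rcases ht1.lt_or_eq with ht1 | rfl
  · refine (Dden_pos_of_lt_one hp (fun u v => (hQ u v).le) hr ht0 ht1 ?_).ne'
    exact summable_mul_pow_succ hγ0 ht0 (by nlinarith) hbound
  · obtain ⟨k, rfl⟩ : ∃ k, r = k + 1 := ⟨r - 1, by omega⟩
    rw [Dden_one]
    exact (pinf_succ_pos hMarkov hp hQ k).ne'

lemma one_add_zeroGap_mul_pinf_le {q M pm K γ : ℝ} (hpinf : ∀ k, pinf μ U s (k + 1) ≤ q ^ k)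
    (hpm : 0 < pm) (hpmp : ∀ u, pm ≤ p u) (hq : 0 ≤ q) (hγ : 0 ≤ γ) (hK : 0 ≤ K)
    (hγM : γ ≤ M) (hqM : q ≤ M) (hM : M < 1)
    (hbound : ∀ z, |(Q ^ (z + 1)) (s 1) (s r) - p (s r)| ≤ K * γ ^ (z + 1)) (hr : 1 ≤ r)
    (ht : 1 < t) (hD : Dden μ U Q p s r t = 0) :
    1 + zeroGap M K pm * pinf μ U s r ≤ t := by
  obtain ⟨k, rfl⟩ : ∃ k, r = k + 1 := ⟨r - 1, by omega⟩
  have hP0 : 0 ≤ pinf μ U s (k + 1) := pinf_nonneg _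
  by_cases htM : t ≤ 1 + (1 - M) / 2
  · have hX := abs_Dden_tail_le hpinf hpm hpmp hq hγ hK hbound hr (by linarith)
      (mul_le_one_add_div_two hγ hγM (by linarith) htM)
      (mul_le_one_add_div_two hq hqM (by linarith) htM) (by linarith)
    set C := tailBound ((1 + M) / 2) K pm
    have hC : 0 < C := tailBound_pos (by linarith) hK hpm
    have hPC : pinf μ U s (k + 1) ≤ (t - 1) * C :=
      le_sub_one_mul_of_add_one_sub_mul_eq_zero hP0 ht.le hX (Dden_eq.symm.trans hD)
    have hgap : C⁻¹ * pinf μ U s (k + 1) ≤ t - 1 := (inv_mul_le_iff₀ hC).2 (by linarith)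
    calc 1 + zeroGap M K pm * pinf μ U s (k + 1) ≤ 1 + C⁻¹ * pinf μ U s (k + 1) := by
          gcongr; exact min_le_right _ _
      _ ≤ t := by linarith
  · have hP1 : pinf μ U s (k + 1) ≤ 1 := (hpinf k).trans (pow_le_one₀ hq (by linarith))
    calc 1 + zeroGap M K pm * pinf μ U s (k + 1) ≤ 1 + (1 - M) / 2 * 1 :=
          (add_le_add_iff_left 1).2 (mul_le_mul (min_le_left _ _) hP1 hP0 (by linarith))
      _ ≤ t := by linarith

end Markov

theorem Dden_zeroes_general
    {Ω : Type*} [MeasurableSpace Ω] (μ : Measure Ω)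
    (U : ℕ → Ω → Fin 4)
    (Q : Matrix (Fin 4) (Fin 4) ℝ) (p : Fin 4 → ℝ)
    (hQpos : ∀ u v, 0 < Q u v) (hQrow : ∀ u, ∑ v, Q u v = 1)
    (hppos : ∀ u, 0 < p u) (hpsum : ∑ u, p u = 1)
    (hMarkov : ∀ (n : ℕ) (w : Fin (n + 1) → Fin 4),
      (μ {ω | ∀ i : Fin (n + 1), U (i.1 + 1) ω = w i}).toReal
        = p (w 0) * ∏ i : Fin n, Q (w i.castSucc) (w i.succ))
    (γ K : ℝ) (hγ0 : 0 ≤ γ) (hγ1 : γ < 1) (hK : 0 ≤ K)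
    (hbound : ∀ (u v : Fin 4) (m : ℕ), 1 ≤ m → |(Q ^ m) u v - p v| ≤ K * γ ^ m) :
    ∃ κ : ℝ, 0 < κ ∧ ∀ (s : ℕ → Fin 4) (r : ℕ), 1 ≤ r →
      (∀ t ∈ Set.Icc (0 : ℝ) 1, Dden μ U Q p s r t ≠ 0) ∧
      (∀ t : ℝ, 1 < t → γ * t < 1 → Dden μ U Q p s r t = 0 →
        1 + κ * pinf μ U s r ≤ t) := by
  obtain ⟨⟨u₀, v₀⟩, hQmax⟩ := Finite.exists_max fun x : Fin 4 × Fin 4 => Q x.1 x.2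
  obtain ⟨u₁, hpmin⟩ := Finite.exists_min p
  have hQ0 : ∀ u v, 0 ≤ Q u v := fun u v => (hQpos u v).le
  have hq1 := Matrix.apply_lt_one_of_pos_of_sum_eq_one hQpos hQrow u₀ v₀
  have hp1 : ∀ u, p u ≤ 1 := fun u =>
    hpsum ▸ single_le_sum (fun v _ => (hppos v).le) (mem_univ u)
  have hpinf : ∀ s k, pinf μ U s (k + 1) ≤ Q u₀ v₀ ^ k := fun s =>
    pinf_succ_le_pow hMarkov hp1 hQ0 fun u v => hQmax (u, v)
  have hbound' : ∀ (s : ℕ → Fin 4) r z,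
      |(Q ^ (z + 1)) (s 1) (s r) - p (s r)| ≤ K * γ ^ (z + 1) :=
    fun s r z => hbound _ _ _ (Nat.le_add_left 1 z)
  refine ⟨zeroGap (max γ (Q u₀ v₀)) K (p u₁),
    zeroGap_pos (max_lt hγ1 hq1) hK (hppos u₁),
    fun s r hr => ⟨fun t ht => ?_, fun t ht _ hD => ?_⟩⟩
  · exact Dden_ne_zero_of_mem_Icc hppos hQpos hMarkov hγ0 hγ1 (hbound' s r) hr ht
  · exact one_add_zeroGap_mul_pinf_le (hpinf s) (hppos u₁) hpmin (hQ0 _ _) hγ0 hK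
      (le_max_left _ _) (le_max_right _ _) (max_lt hγ1 hq1) (hbound' s r) hr ht hD

/-- `D(t) ≠ 0` on `[0,1]`, and there is a constant `κ > 0` independent
of `r` and `s` such that every real zero `t` of `D` with `1 < t < 1/γ` satisfies
`t ≥ 1 + κ p(s^(r))`. -/
theorem Dden_zeroes
    {Ω : Type*} [MeasurableSpace Ω] (μ : Measure Ω) [IsProbabilityMeasure μ]
    (U : ℕ → Ω → Fin 4) (hU : ∀ n, Measurable (U n))
    (Q : Matrix (Fin 4) (Fin 4) ℝ) (p : Fin 4 → ℝ)
    (hQpos : ∀ u v, 0 < Q u v) (hQrow : ∀ u, ∑ v, Q u v = 1)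
    (hppos : ∀ u, 0 < p u) (hpsum : ∑ u, p u = 1)
    (hpinv : ∀ v, ∑ u, p u * Q u v = p v)
    (hMarkov : ∀ (n : ℕ) (w : Fin (n + 1) → Fin 4),
      (μ {ω | ∀ i : Fin (n + 1), U (i.1 + 1) ω = w i}).toReal
        = p (w 0) * ∏ i : Fin n, Q (w i.castSucc) (w i.succ))
    (γ K : ℝ) (hγ0 : 0 ≤ γ) (hγ1 : γ < 1) (hK : 0 ≤ K)
    (hbound : ∀ (u v : Fin 4) (m : ℕ), 1 ≤ m → |(Q ^ m) u v - p v| ≤ K * γ ^ m) :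
    ∃ κ : ℝ, 0 < κ ∧ ∀ (s : ℕ → Fin 4) (r : ℕ), 1 ≤ r →
      (∀ t ∈ Set.Icc (0 : ℝ) 1, Dden μ U Q p s r t ≠ 0) ∧
      (∀ t : ℝ, 1 < t → γ * t < 1 → Dden μ U Q p s r t = 0 →
        1 + κ * pinf μ U s r ≤ t) :=
  Dden_zeroes_general μ U Q p hQpos hQrow hppos hpsum hMarkov γ K hγ0 hγ1 hK hbound
end
end

section
/- For all real a > 0 and q ≥ 0, ∫_a^∞ ln((1 − 1/(y+1+q))^{−1}) · dy/y = L(−q/a) − L(−(1+q)/a). -/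
open MeasureTheory Filter Finset

noncomputable section

/-- `L x` is the real dilogarithm `Li₂(x) = -∫_0^1 ln(1 - x u) / u du` (for `x ≤ 0`, this is
the analytic continuation of `∑_{k ≥ 1} x^k / k²`). -/
def L (x : ℝ) : ℝ := -∫ u in (0 : ℝ)..1, Real.log (1 - x * u) / u

/-!
The substitution `y = a / u` maps `(0, 1)` onto `(a, ∞)` and turns `dy / y` into `du / u`, while
`(1 - 1 / (y + 1 + q))⁻¹ = (a + (1 + q) u) / (a + q u)`. The logarithm of this quotient splits
into `ln (1 + (1 + q) u / a) - ln (1 + q u / a)`, and integrating each term against `du / u`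
over `(0, 1)` gives `-L (-(1 + q) / a)` and `-L (-q / a)`.
-/

open Set

theorem L_neg_eq_neg_integral_Ioo (c : ℝ) :
    L (-c) = -∫ u in Ioo (0 : ℝ) 1, Real.log (1 + c * u) / u := by
  simp only [L, neg_mul, sub_neg_eq_add, intervalIntegral.integral_of_le zero_le_one,
    integral_Ioc_eq_integral_Ioo]

theorem integrableOn_log_one_add_mul_div_Ioo {c : ℝ} (hc : 0 ≤ c) :
    IntegrableOn (fun u : ℝ => Real.log (1 + c * u) / u) (Ioo 0 1) := by
  refine Measure.integrableOn_of_bounded (M := c) (by simp [Real.volume_Ioo])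
    (by fun_prop : Measurable fun u : ℝ => Real.log (1 + c * u) / u).aestronglyMeasurable ?_
  filter_upwards [ae_restrict_mem measurableSet_Ioo] with u hu
  have hu0 : 0 < u := hu.1
  have hcu : 0 ≤ c * u := by positivity
  have hlog_le : Real.log (1 + c * u) ≤ c * u := by
    linarith [Real.log_le_sub_one_of_pos (by linarith : (0 : ℝ) < 1 + c * u)]
  rw [Real.norm_eq_abs, abs_of_nonneg (div_nonneg (Real.log_nonneg (by linarith)) hu0.le),
    div_le_iff₀ hu0]
  exact hlog_le

theorem image_div_Ioo_zero_one {a : ℝ} (ha : 0 < a) :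
    (fun u : ℝ => a / u) '' Ioo 0 1 = Ioi a := by
  ext y
  simp only [mem_image, Set.mem_Ioo, Set.mem_Ioi]
  constructor
  · rintro ⟨u, ⟨hu0, hu1⟩, rfl⟩
    exact (lt_div_iff₀ hu0).2 (by nlinarith)
  · intro hy
    have hy0 : 0 < y := ha.trans hy
    exact ⟨a / y, ⟨by positivity, (div_lt_one hy0).2 hy⟩, div_div_cancel₀ ha.ne'⟩

theorem integral_Ioi_eq_integral_Ioo_comp_div {E : Type*} [NormedAddCommGroup E]
    [NormedSpace ℝ E] {a : ℝ} (ha : 0 < a) (f : ℝ → E) :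
    ∫ y in Ioi a, f y = ∫ u in Ioo 0 1, (a / u ^ 2) • f (a / u) := by
  have hderiv : ∀ u ∈ Ioo (0 : ℝ) 1,
      HasDerivWithinAt (fun u : ℝ => a / u) (-(a / u ^ 2)) (Ioo 0 1) u := fun u hu => by
    simpa [div_eq_mul_inv] using ((hasDerivAt_inv hu.1.ne').const_mul a).hasDerivWithinAt
  have hinj : InjOn (fun u : ℝ => a / u) (Ioo 0 1) := fun u hu v hv huv =>
    inv_injective (mul_left_cancel₀ ha.ne' huv)
  rw [← image_div_Ioo_zero_one ha,
    integral_image_eq_integral_abs_deriv_smul measurableSet_Ioo hderiv hinj]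
  refine setIntegral_congr_fun measurableSet_Ioo fun u hu => ?_
  rw [abs_neg, abs_of_pos (by have := hu.1; positivity)]

theorem div_sq_mul_log_inv_one_sub_div_eq {a q u : ℝ} (ha : 0 < a) (hq : 0 ≤ q) (hu : 0 < u) :
    a / u ^ 2 * (Real.log (1 - 1 / (a / u + 1 + q))⁻¹ / (a / u))
      = Real.log (1 + (1 + q) / a * u) / u - Real.log (1 + q / a * u) / u := by
  have hA : 0 < a + (1 + q) * u := by positivity
  have hB : 0 < a + q * u := by positivity
  have hquot : (1 - 1 / (a / u + 1 + q))⁻¹ = (a + (1 + q) * u) / (a + q * u) := by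
    have h : a / u + 1 + q = (a + (1 + q) * u) / u := by field_simp; ring
    rw [h, one_div_div, ← inv_div (a + q * u)]
    congr 1
    rw [eq_div_iff hA.ne', sub_mul, div_mul_cancel₀ _ hA.ne']
    ring
  have h1 : 1 + (1 + q) / a * u = (a + (1 + q) * u) / a := by field_simp
  have h2 : 1 + q / a * u = (a + q * u) / a := by field_simp
  rw [hquot, h1, h2, Real.log_div hA.ne' hB.ne', Real.log_div hA.ne' ha.ne',
    Real.log_div hB.ne' ha.ne']
  field_simp
  ring

/-- For all `a > 0` and `q ≥ 0`,
`∫_a^∞ ln((1 - 1/(y+1+q))⁻¹) dy/y = Li₂(-q/a) - Li₂(-(1+q)/a)`. -/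
theorem dilog_integral_identity (a q : ℝ) (ha : 0 < a) (hq : 0 ≤ q) :
    ∫ y in Set.Ioi a, Real.log (1 - 1 / (y + 1 + q))⁻¹ / y
      = L (-q / a) - L (-(1 + q) / a) := by
  have hq' : 0 ≤ q / a := by positivity
  have hq1 : 0 ≤ (1 + q) / a := by positivity
  rw [integral_Ioi_eq_integral_Ioo_comp_div ha]
  simp only [smul_eq_mul]
  rw [setIntegral_congr_fun measurableSet_Ioo
      fun u hu => div_sq_mul_log_inv_one_sub_div_eq ha hq hu.1,
    integral_sub (integrableOn_log_one_add_mul_div_Ioo hq1)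
      (integrableOn_log_one_add_mul_div_Ioo hq'),
    neg_div, neg_div, L_neg_eq_neg_integral_Ioo, L_neg_eq_neg_integral_Ioo]
  ring

end
end
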